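/- Let N be an odd positive integer, θ ∈ (0, π/2), k ∈ {0, 1, …, 2N−1}, and λ_k = exp(πik/N). Then Σ_{n=0}^{N−1} a_n(λ_k)·conj(b_n(λ_k)) = (−1)^k · N · tanθ · cos^N θ / (1 + (−1)^k · cos^N θ). -/

import Mathlib

open Complex

/-- `ω = exp(2πi/N)`. -/
noncomputable def omegaN (N : ℕ) : ℂ := Complex.exp (2 * Real.pi * Complex.I / N)

/-- `a_n(λ) = ω^(−n(n−1)/2) · ∏_{j=0}^{n−1} (1 + λ⁻¹ωʲ/cosθ)/(1 + λω⁻ʲ/cosθ)`. -/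
noncomputable def aCoef (N : ℕ) (θ : ℝ) (lam : ℂ) (n : ℕ) : ℂ :=
  (omegaN N)⁻¹ ^ (n * (n - 1) / 2) *
    ∏ j ∈ Finset.range n,
      (1 + lam⁻¹ * omegaN N ^ j / (Real.cos θ : ℂ)) /
      (1 + lam * (omegaN N)⁻¹ ^ j / (Real.cos θ : ℂ))

/-- `b_n(λ) = a_n(λ)·tanθ/(1 + λω⁻ⁿ/cosθ)`. -/
noncomputable def bCoef (N : ℕ) (θ : ℝ) (lam : ℂ) (n : ℕ) : ℂ :=
  aCoef N θ lam n * (Real.tan θ : ℂ) / (1 + lam * (omegaN N)⁻¹ ^ n / (Real.cos θ : ℂ))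

/-!
Since `‖λ‖ = ‖ω‖ = 1`, the numerator of each factor of `a_n(λ)` is the complex conjugate of its
denominator, so `‖a_n(λ)‖ = 1` and `a_n(λ) · conj (b_n(λ)) = tan θ / (1 - z ωⁿ)` with
`z = -λ⁻¹ / cos θ`. Writing `1 / (1 - z ωⁿ)` as a geometric sum of length `N` divided by `1 - zᴺ`
and summing over `n`, orthogonality of the `N`-th roots of unity leaves only the constant terms:
`∑ₙ 1 / (1 - z ωⁿ) = N / (1 - zᴺ)`. For odd `N` and `λ = λ_k`, `zᴺ = -(-1)ᵏ / cosᴺ θ`.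
-/

open Finset ComplexConjugate

namespace IsPrimitiveRoot

variable {K : Type*} [Field K] {ζ : K} {N : ℕ}

theorem geom_sum_pow_eq_zero (hζ : IsPrimitiveRoot ζ N) {j : ℕ} (hj₀ : j ≠ 0) (hjN : j < N) :
    ∑ n ∈ range N, (ζ ^ j) ^ n = 0 := by
  rw [geom_sum_eq (hζ.pow_ne_one_of_pos_of_lt hj₀ hjN), ← pow_mul, mul_comm, pow_mul,
    hζ.pow_eq_one, one_pow, sub_self, zero_div]

theorem sum_inv_one_sub_mul_pow (hζ : IsPrimitiveRoot ζ N) {z : K} (hz : z ^ N ≠ 1) :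
    ∑ n ∈ range N, (1 - z * ζ ^ n)⁻¹ = N / (1 - z ^ N) := by
  have hzN : 1 - z ^ N ≠ 0 := sub_ne_zero.mpr hz.symm
  have hterm (n : ℕ) : (1 - z * ζ ^ n)⁻¹ = (∑ j ∈ range N, (z * ζ ^ n) ^ j) / (1 - z ^ N) := by
    have hpow : (z * ζ ^ n) ^ N = z ^ N := by
      rw [mul_pow, ← pow_mul, mul_comm n, pow_mul, hζ.pow_eq_one, one_pow, mul_one]
    have hne : 1 - z * ζ ^ n ≠ 0 := fun h => hz (by rw [← hpow, ← sub_eq_zero.mp h, one_pow])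
    rw [eq_div_iff hzN, ← hpow, ← mul_neg_geom_sum, inv_mul_cancel_left₀ hne]
  have hswap : ∑ n ∈ range N, ∑ j ∈ range N, (z * ζ ^ n) ^ j
      = ∑ j ∈ range N, z ^ j * ∑ n ∈ range N, (ζ ^ j) ^ n := by
    rw [sum_comm]
    refine sum_congr rfl fun j _ => ?_
    simp only [mul_sum, mul_pow, ← pow_mul, mul_comm]
  rw [sum_congr rfl fun n _ => hterm n, ← sum_div, hswap, sum_eq_single_of_mem 0]
  · simp
  · exact mem_range.mpr (Nat.pos_of_ne_zero fun h => hz (by rw [h, pow_zero]))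
  · intro j hj hj₀
    rw [hζ.geom_sum_pow_eq_zero hj₀ (mem_range.mp hj), mul_zero]

end IsPrimitiveRoot

theorem Complex.one_add_div_ofReal_ne_zero {u : ℂ} (hu : ‖u‖ = 1) {c : ℝ} (hc : |c| ≠ 1) :
    1 + u / c ≠ 0 := by
  intro h
  have hc₀ : (c : ℂ) ≠ 0 := fun h₀ => by simp [h₀] at h
  have hu' : u = -c := by field_simp at h; linear_combination h
  exact hc (by rw [← hu, hu', norm_neg, norm_real, Real.norm_eq_abs])

theorem Complex.conj_one_add_div_ofReal (u : ℂ) (c : ℝ) :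
    conj (1 + u / c) = 1 + conj u / c := by
  simp only [map_add, map_one, map_div₀, conj_ofReal]

theorem isPrimitiveRoot_omegaN (N : ℕ) [NeZero N] : IsPrimitiveRoot (omegaN N) N :=
  isPrimitiveRoot_exp N (NeZero.ne N)

theorem norm_omegaN (N : ℕ) : ‖omegaN N‖ = 1 := by
  rw [omegaN, show 2 * (Real.pi : ℂ) * I / N = ((2 * Real.pi / N : ℝ) : ℂ) * I by push_cast; ring,
    norm_exp_ofReal_mul_I]

section

variable {N : ℕ} {θ : ℝ} {lam : ℂ}

theorem conj_lam_mul_omegaN_inv_pow (hlam : ‖lam‖ = 1) (j : ℕ) :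
    conj (lam * (omegaN N)⁻¹ ^ j) = lam⁻¹ * omegaN N ^ j := by
  rw [map_mul, map_pow, ← inv_eq_conj hlam, ← inv_eq_conj (by rw [norm_inv, norm_omegaN, inv_one]),
    inv_inv]

theorem norm_aCoef (hlam : ‖lam‖ = 1) (hc : |Real.cos θ| ≠ 1) (n : ℕ) :
    ‖aCoef N θ lam n‖ = 1 := by
  have hfactor (j : ℕ) : ‖(1 + lam⁻¹ * omegaN N ^ j / (Real.cos θ : ℂ)) /
      (1 + lam * (omegaN N)⁻¹ ^ j / (Real.cos θ : ℂ))‖ = 1 := by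
    have hu : ‖lam * (omegaN N)⁻¹ ^ j‖ = 1 := by simp [hlam, norm_omegaN]
    rw [← conj_lam_mul_omegaN_inv_pow hlam, ← conj_one_add_div_ofReal, norm_div, norm_conj,
      div_self (norm_ne_zero_iff.mpr (one_add_div_ofReal_ne_zero hu hc))]
  rw [aCoef, norm_mul, norm_prod, prod_eq_one fun j _ => hfactor j, norm_pow, norm_inv, norm_omegaN,
    inv_one, one_pow, one_mul]

theorem aCoef_mul_conj_bCoef (hlam : ‖lam‖ = 1) (hc : |Real.cos θ| ≠ 1) (n : ℕ) :
    aCoef N θ lam n * conj (bCoef N θ lam n)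
      = Real.tan θ * (1 + lam⁻¹ * omegaN N ^ n / (Real.cos θ : ℂ))⁻¹ := by
  rw [bCoef, map_div₀, map_mul, conj_ofReal, conj_one_add_div_ofReal,
    conj_lam_mul_omegaN_inv_pow hlam, mul_div_assoc', ← mul_assoc, mul_conj',
    norm_aCoef hlam hc]
  simp [div_eq_mul_inv]

theorem sum_aCoef_mul_conj_bCoef [NeZero N] (hlam : ‖lam‖ = 1) (hc : |Real.cos θ| ≠ 1) :
    ∑ n ∈ range N, aCoef N θ lam n * conj (bCoef N θ lam n)
      = Real.tan θ * N / (1 - (-lam⁻¹ / Real.cos θ) ^ N) := by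
  have hz : ‖-lam⁻¹ / (Real.cos θ : ℂ)‖ = |Real.cos θ|⁻¹ := by
    rw [norm_div, norm_neg, norm_inv, hlam, inv_one, norm_real, Real.norm_eq_abs, one_div]
  have hzN : (-lam⁻¹ / Real.cos θ) ^ N ≠ 1 := by
    intro h
    have := congrArg norm h
    rw [norm_pow, hz, norm_one, pow_eq_one_iff_of_nonneg (by positivity) (NeZero.ne N)] at this
    exact hc (inv_eq_one.mp this)
  have hsummand (n : ℕ) : aCoef N θ lam n * conj (bCoef N θ lam n)
      = Real.tan θ * (1 - (-lam⁻¹ / Real.cos θ) * omegaN N ^ n)⁻¹ := by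
    rw [aCoef_mul_conj_bCoef hlam hc]
    ring
  rw [sum_congr rfl fun n _ => hsummand n, ← mul_sum,
    (isPrimitiveRoot_omegaN N).sum_inv_one_sub_mul_pow hzN, mul_div_assoc]

end

theorem psw_offdiag_sum_general (N : ℕ) [NeZero N] (hN : Odd N)
    (θ : ℝ) (hθ : θ ∈ Set.Ioo 0 (Real.pi / 2))
    (k : ℕ)
    (lam : ℂ) (hlam : lam = Complex.exp (Real.pi * Complex.I * k / N)) :
    ∑ n ∈ Finset.range N, aCoef N θ lam n * (starRingEnd ℂ) (bCoef N θ lam n)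
      = (-1 : ℂ) ^ k * N * (Real.tan θ : ℂ) * (Real.cos θ : ℂ) ^ N
          / (1 + (-1 : ℂ) ^ k * (Real.cos θ : ℂ) ^ N) := by
  have hc₀ : 0 < Real.cos θ := Real.cos_pos_of_mem_Ioo ⟨by linarith [hθ.1, Real.pi_pos], hθ.2⟩
  have hc₁ : Real.cos θ < 1 := by
    simpa using Real.cos_lt_cos_of_nonneg_of_le_pi le_rfl (by linarith [hθ.2, Real.pi_pos]) hθ.1
  have hc : |Real.cos θ| ≠ 1 := by rw [abs_of_pos hc₀]; exact hc₁.ne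
  have hlam_norm : ‖lam‖ = 1 := by
    rw [hlam, show (Real.pi : ℂ) * I * k / N = ((Real.pi * k / N : ℝ) : ℂ) * I by push_cast; ring,
      norm_exp_ofReal_mul_I]
  have hlamN : lam ^ N = (-1) ^ k := by
    rw [hlam, ← exp_nat_mul, mul_div_cancel₀ _ (Nat.cast_ne_zero.mpr (NeZero.ne N)), mul_comm,
      exp_nat_mul, exp_pi_mul_I]
  have hcC : (Real.cos θ : ℂ) ≠ 0 := ofReal_ne_zero.mpr hc₀.ne'
  rw [sum_aCoef_mul_conj_bCoef hlam_norm hc, div_pow, hN.neg_pow, inv_pow, hlamN]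
  field_simp
  ring

/-- for odd `N`, `θ ∈ (0, π/2)`, `0 ≤ k < 2N` and `λ_k = exp(πik/N)`,
`Σ_{n=0}^{N−1} a_n(λ_k)·conj(b_n(λ_k)) = (−1)ᵏ·N·tanθ·cosᴺθ / (1 + (−1)ᵏ·cosᴺθ)`. -/
theorem psw_offdiag_sum (N : ℕ) [NeZero N] (hN : Odd N)
    (θ : ℝ) (hθ : θ ∈ Set.Ioo 0 (Real.pi / 2))
    (k : ℕ) (hk : k < 2 * N)
    (lam : ℂ) (hlam : lam = Complex.exp (Real.pi * Complex.I * k / N)) :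
    ∑ n ∈ Finset.range N, aCoef N θ lam n * (starRingEnd ℂ) (bCoef N θ lam n)
      = (-1 : ℂ) ^ k * N * (Real.tan θ : ℂ) * (Real.cos θ : ℂ) ^ N
          / (1 + (-1 : ℂ) ^ k * (Real.cos θ : ℂ) ^ N) :=
  psw_offdiag_sum_general N hN θ hθ k lam hlam
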